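/- arXiv:2010.11527 — 4 statements merged into one kernel-verified Lean document; each statement's English description precedes it below -/
import Mathlib

section
/- For every binary relation φ : ℕ → ℕ → Prop and every natural number x, if for every w there exists y < x such that φ y z holds for all z < w, then there exists y < x such that φ y z holds for all z. -/
/-- Otherwise each of the finitely many `i` fails at some point, and any `w` strictly above all
these points contradicts `h`. -/
theorem Finite.exists_forall_of_forall_exists_forall_lt {ι α : Type*} [Finite ι] [Preorder α]
    [IsDirectedOrder α] [NoMaxOrder α] [Nonempty α] (φ : ι → α → Prop)
    (h : ∀ w, ∃ i, ∀ z < w, φ i z) : ∃ i, ∀ z, φ i z := by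
  by_contra! hfail
  choose f hf using hfail
  obtain ⟨M, hM⟩ := Finite.exists_le f
  obtain ⟨w, hw⟩ := exists_gt M
  obtain ⟨i, hi⟩ := h w
  exact hf i (hi (f i) ((hM i).trans_lt hw))

theorem stmt_3 (φ : ℕ → ℕ → Prop) (x : ℕ)
    (h : ∀ w, ∃ y < x, ∀ z < w, φ y z) :
    ∃ y < x, ∀ z, φ y z := by
  obtain ⟨⟨y, hy⟩, hφ⟩ := Finite.exists_forall_of_forall_exists_forall_lt
    (fun y : Fin x => φ y) fun w => by
      obtain ⟨y, hy, hφ⟩ := h w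
      exact ⟨⟨y, hy⟩, hφ⟩
  exact ⟨y, hy, hφ⟩
end

section
/- Let φ : ℕ → ℕ → Prop. Suppose the double negation shift holds for the paired family, i.e. (∀ z : ℕ, ¬¬φ (Nat.unpair z).1 (Nat.unpair z).2) → ¬¬(∀ z : ℕ, φ (Nat.unpair z).1 (Nat.unpair z).2). Then (∀ x, ¬¬(∀ y, φ x y)) → ¬¬(∀ x, ∀ y, φ x y). -/
theorem Function.Surjective.not_not_forall_forall_of_dns {α β γ : Type*} {f : γ → α × β}
    (hf : Function.Surjective f) (φ : α → β → Prop)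
    (h : (∀ z, ¬¬ φ (f z).1 (f z).2) → ¬¬ ∀ z, φ (f z).1 (f z).2) :
    (∀ x, ¬¬ ∀ y, φ x y) → ¬¬ ∀ x y, φ x y := by
  intro hx hcon
  have hz : ∀ z, ¬¬ φ (f z).1 (f z).2 := fun z hn => hx (f z).1 fun hy => hn (hy _)
  refine h hz fun hall => hcon fun x y => ?_
  obtain ⟨z, hz⟩ := hf (x, y)
  simpa [hz] using hall z

theorem stmt_5 (φ : ℕ → ℕ → Prop)
    (h : (∀ z : ℕ, ¬¬ φ (Nat.unpair z).1 (Nat.unpair z).2) →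
      ¬¬ (∀ z : ℕ, φ (Nat.unpair z).1 (Nat.unpair z).2)) :
    (∀ x, ¬¬ (∀ y, φ x y)) → ¬¬ (∀ x, ∀ y, φ x y) :=
  Nat.surjective_unpair.not_not_forall_forall_of_dns φ h
end

section
/- Let Γ be a set of propositions. If ∀ p ∈ Γ, ¬p ∨ ¬¬p, then for every p ∈ Γ and every proposition q, ¬(p ∧ q) → ¬p ∨ ¬q. -/
theorem not_or_not_of_not_and_of_not_or_not_not {p q : Prop} (hp : ¬p ∨ ¬¬p)
    (hpq : ¬(p ∧ q)) : ¬p ∨ ¬q :=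
  hp.imp_right fun hnnp hq => hnnp fun hp => hpq ⟨hp, hq⟩

theorem stmt_7 (Γ : Set Prop) (h : ∀ p ∈ Γ, ¬p ∨ ¬¬p) :
    ∀ p ∈ Γ, ∀ q : Prop, ¬(p ∧ q) → ¬p ∨ ¬q :=
  fun p hp _ => not_or_not_of_not_and_of_not_or_not_not (h p hp)
end

section
/- Let Γ be a set of propositions that is closed under disjunction (if p ∈ Γ and q ∈ Γ then (p ∨ q) ∈ Γ). If ∀ p ∈ Γ, ¬¬p → p, then for all p ∈ Γ and q ∈ Γ, ¬(¬p ∧ ¬q) → ¬¬p ∨ ¬¬q. -/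
/-! Intuitionistically, `¬(¬p ∧ ¬q)` is `¬¬(p ∨ q)`; since `p ∨ q ∈ Γ`, double-negation elimination
turns it into `p ∨ q`, and each disjunct gives its own double negation. -/

theorem not_not_or_not_not_of_not_and_not {p q : Prop} (hdne : ¬¬(p ∨ q) → p ∨ q)
    (h : ¬(¬p ∧ ¬q)) : ¬¬p ∨ ¬¬q :=
  (hdne fun hpq => h (not_or.mp hpq)).imp not_not_intro not_not_intro

theorem stmt_15 (Γ : Set Prop)
    (hclosed : ∀ p ∈ Γ, ∀ q ∈ Γ, (p ∨ q) ∈ Γ)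
    (h : ∀ p ∈ Γ, ¬¬p → p) :
    ∀ p ∈ Γ, ∀ q ∈ Γ, ¬(¬p ∧ ¬q) → ¬¬p ∨ ¬¬q :=
  fun p hp q hq => not_not_or_not_not_of_not_and_not (h _ (hclosed p hp q hq))
end
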